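/- Let σ, γ > 0, t, s ≥ 0 and a > 0. Then ∫_ℝ [1 − 2Φ(−(t + s − 2σ√γ g)/(2a))] · min(1, φ_{σ²γ}(t − σ√γ g)/φ_{σ²γ}(σ√γ g)) φ(g) dg = 2 P(σ√γ G ≥ t/2 and −s − t ≤ 2a G̃ − 2σ√γ G ≤ s − t), where G, G̃ are independent standard one-dimensional Gaussian random variables. -/

import Mathlib

open MeasureTheory ProbabilityTheory
open scoped NNReal ENNReal

/-- Standard Gaussian density. -/
noncomputable def stdG (g : ℝ) : ℝ :=
  (Real.sqrt (2 * Real.pi))⁻¹ * Real.exp (-g ^ 2 / 2)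

/-- Standard Gaussian cumulative distribution function. -/
noncomputable def Phi (x : ℝ) : ℝ := ∫ u in Set.Iio x, stdG u

/-- Density of the one-dimensional centered Gaussian with variance `v`. -/
noncomputable def gpdf (v x : ℝ) : ℝ :=
  (Real.sqrt (2 * Real.pi * v))⁻¹ * Real.exp (-x ^ 2 / (2 * v))

/-!
With `c = σ √γ` and `τ = t / c`, the factor `min 1 (φ_{c²}(t - c g) / φ_{c²}(c g)) φ(g)` is
`min (φ g) (φ (g - τ))`. This function is symmetric about `τ / 2` and equals `φ g` for
`g ≥ τ / 2` (as `τ ≥ 0`), so folding the integral at `τ / 2` leaves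
`∫_{g > τ/2} (h g + h (τ - g)) φ g` for the bounded factor `h`. By `Φ (-x) = 1 - Φ x` the folded
factor is `2 (Φ (u g) - Φ (l g))`, where `[l g, u g]` is the window for `G̃` given `G = g`;
integrating out `G̃` gives the same expression for the probability on the right.
-/

open Set

theorem integral_eq_setIntegral_Ioi_add_reflect {E : Type*} [NormedAddCommGroup E]
    [NormedSpace ℝ E] {f : ℝ → E} (hf : Integrable f) (p : ℝ) :
    ∫ x, f x = ∫ x in Ioi p, (f x + f (2 * p - x)) := by
  have hreflect : ∫ x in Ioi p, f (2 * p - x) = ∫ x in Iic p, f x := by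
    have h := (volume.measurePreserving_sub_left (2 * p)).setIntegral_preimage_emb
      (MeasurableEquiv.subLeft (2 * p)).measurableEmbedding f (Iic p)
    have hpre : (fun x => 2 * p - x) ⁻¹' Iic p = Ici p := by
      ext x; simp only [mem_preimage, mem_Iic, mem_Ici]; constructor <;> intro <;> linarith
    rwa [hpre, integral_Ici_eq_integral_Ioi] at h
  rw [integral_add hf.integrableOn (hf.comp_sub_left (2 * p)).integrableOn, hreflect, add_comm,
    intervalIntegral.integral_Iic_add_Ioi hf.integrableOn hf.integrableOn]

theorem measureReal_prod_apply {α β : Type*} [MeasurableSpace α] [MeasurableSpace β]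
    (μ : Measure α) (ν : Measure β) [IsFiniteMeasure ν] {s : Set (α × β)}
    (hs : MeasurableSet s) : (μ.prod ν).real s = ∫ x, ν.real (Prod.mk x ⁻¹' s) ∂μ := by
  simp_rw [measureReal_def]
  rw [Measure.prod_apply hs, integral_toReal (measurable_measure_prodMk_left hs).aemeasurable
    (ae_of_all _ fun _ => measure_lt_top _ _)]

lemma stdG_eq_gaussianPDFReal : stdG = gaussianPDFReal 0 1 := by
  ext x; simp [stdG, gaussianPDFReal]

lemma stdG_pos (x : ℝ) : 0 < stdG x := by unfold stdG; positivity

lemma stdG_neg (x : ℝ) : stdG (-x) = stdG x := by simp [stdG]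

lemma integrable_stdG : Integrable stdG :=
  stdG_eq_gaussianPDFReal ▸ integrable_gaussianPDFReal 0 1

lemma gpdf_sq_eq_inv_mul_stdG {c : ℝ} (hc : 0 < c) (x : ℝ) :
    gpdf (c ^ 2) x = c⁻¹ * stdG (x / c) := by
  unfold gpdf stdG
  rw [Real.sqrt_mul (by positivity), Real.sqrt_sq hc.le,
    show -(x / c) ^ 2 / 2 = -x ^ 2 / (2 * c ^ 2) by field_simp]
  ring

lemma Phi_eq_cdf : Phi = cdf (gaussianReal 0 1) := by
  ext x
  rw [cdf_eq_real, measureReal_def, gaussianReal_apply_eq_integral 0 one_ne_zero,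
    ENNReal.toReal_ofReal (integral_nonneg fun _ => gaussianPDFReal_nonneg _ _ _),
    integral_Iic_eq_integral_Iio, ← stdG_eq_gaussianPDFReal, Phi]

@[fun_prop]
lemma measurable_Phi : Measurable Phi := Phi_eq_cdf ▸ (monotone_cdf _).measurable

lemma Phi_nonneg (x : ℝ) : 0 ≤ Phi x := Phi_eq_cdf ▸ cdf_nonneg _ x

lemma Phi_le_one (x : ℝ) : Phi x ≤ 1 := Phi_eq_cdf ▸ cdf_le_one _ x

lemma abs_one_sub_two_mul_Phi_le (x : ℝ) : |1 - 2 * Phi x| ≤ 1 :=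
  abs_le.2 ⟨by linarith [Phi_le_one x], by linarith [Phi_nonneg x]⟩

lemma Phi_neg (x : ℝ) : Phi (-x) = 1 - Phi x := by
  have : NullSingletonClass (gaussianReal 0 1) := nullSingletonClass_gaussianReal one_ne_zero
  have hsymm : (gaussianReal 0 1).real (Iic (-x)) = (gaussianReal 0 1).real (Ici x) := by
    rw [← neg_Ici, ← neg_preimage, ← map_measureReal_apply measurable_neg measurableSet_Ici,
      gaussianReal_map_neg, neg_zero]
  rw [Phi_eq_cdf, cdf_eq_real, cdf_eq_real, hsymm, measureReal_congr Ioi_ae_eq_Ici.symm,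
    ← compl_Iic, probReal_compl_eq_one_sub measurableSet_Iic]

lemma gaussianReal_real_Icc {x y : ℝ} (h : x ≤ y) :
    (gaussianReal 0 1).real (Icc x y) = Phi y - Phi x := by
  have : NullSingletonClass (gaussianReal 0 1) := nullSingletonClass_gaussianReal one_ne_zero
  rw [measureReal_congr Ioc_ae_eq_Icc.symm, measureReal_def, ← measure_cdf (gaussianReal 0 1),
    StieltjesFunction.measure_Ioc, Phi_eq_cdf,
    ENNReal.toReal_ofReal (sub_nonneg.2 (monotone_cdf _ h))]

theorem measureReal_gaussianReal_prod_setOf {A : Set ℝ} (hA : MeasurableSet A) {l u : ℝ → ℝ}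
    (hl : Measurable l) (hu : Measurable u) (hlu : ∀ x, l x ≤ u x) :
    ((gaussianReal 0 1).prod (gaussianReal 0 1)).real
        {p | p.1 ∈ A ∧ l p.1 ≤ p.2 ∧ p.2 ≤ u p.1}
      = ∫ x in A, (Phi (u x) - Phi (l x)) * stdG x := by
  have hs : MeasurableSet {p : ℝ × ℝ | p.1 ∈ A ∧ l p.1 ≤ p.2 ∧ p.2 ≤ u p.1} :=
    (measurable_fst hA).inter
      ((measurableSet_le (hl.comp measurable_fst) measurable_snd).inter
        (measurableSet_le measurable_snd (hu.comp measurable_fst)))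
  have hslice (x : ℝ) : stdG x • (gaussianReal 0 1).real
      (Prod.mk x ⁻¹' {p : ℝ × ℝ | p.1 ∈ A ∧ l p.1 ≤ p.2 ∧ p.2 ≤ u p.1})
      = A.indicator (fun x => (Phi (u x) - Phi (l x)) * stdG x) x := by
    by_cases hx : x ∈ A
    · have hIcc : Prod.mk x ⁻¹' {p : ℝ × ℝ | p.1 ∈ A ∧ l p.1 ≤ p.2 ∧ p.2 ≤ u p.1}
          = Icc (l x) (u x) := by
        ext y; simp [hx]
      rw [hIcc, gaussianReal_real_Icc (hlu x), indicator_of_mem hx, smul_eq_mul, mul_comm]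
    · simp [hx]
  rw [measureReal_prod_apply _ _ hs, integral_gaussianReal_eq_integral_smul one_ne_zero,
    ← stdG_eq_gaussianPDFReal, funext hslice, integral_indicator hA]

lemma min_one_gpdf_div_mul_stdG {c : ℝ} (hc : 0 < c) (t x : ℝ) :
    min 1 (gpdf (c ^ 2) (t - c * x) / gpdf (c ^ 2) (c * x)) * stdG x
      = min (stdG x) (stdG (x - t / c)) := by
  have hshift : (t - c * x) / c = -(x - t / c) := by field_simp; ring
  rw [gpdf_sq_eq_inv_mul_stdG hc, gpdf_sq_eq_inv_mul_stdG hc,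
    mul_div_mul_left _ _ (inv_ne_zero hc.ne'), hshift, stdG_neg, mul_div_cancel_left₀ x hc.ne',
    min_mul_of_nonneg _ _ (stdG_pos x).le, one_mul, div_mul_cancel₀ _ (stdG_pos x).ne']

lemma min_stdG_sub_of_le {τ x : ℝ} (hτ : 0 ≤ τ) (hx : τ / 2 ≤ x) :
    min (stdG x) (stdG (x - τ)) = stdG x := by
  refine min_eq_left (mul_le_mul_of_nonneg_left (Real.exp_le_exp.2 ?_) (by positivity))
  nlinarith

lemma min_stdG_sub_reflect (τ x : ℝ) :
    min (stdG (τ - x)) (stdG (τ - x - τ)) = min (stdG x) (stdG (x - τ)) := by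
  rw [sub_sub_cancel_left, stdG_neg, ← neg_sub, stdG_neg, min_comm]

theorem integral_mul_min_stdG_sub {h : ℝ → ℝ} {C : ℝ} (hh : Measurable h)
    (hC : ∀ x, |h x| ≤ C) {τ : ℝ} (hτ : 0 ≤ τ) :
    ∫ x, h x * min (stdG x) (stdG (x - τ))
      = ∫ x in Ioi (τ / 2), (h x + h (τ - x)) * stdG x := by
  have hint : Integrable fun x => h x * min (stdG x) (stdG (x - τ)) :=
    (integrable_stdG.inf (integrable_stdG.comp_sub_right τ)).bdd_mul hh.aestronglyMeasurable
      (ae_of_all _ hC)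
  rw [integral_eq_setIntegral_Ioi_add_reflect hint, mul_div_cancel₀ τ two_ne_zero]
  refine setIntegral_congr_fun measurableSet_Ioi fun x hx => ?_
  rw [min_stdG_sub_reflect, min_stdG_sub_of_le hτ hx.le]
  ring

theorem sticky_two_gaussian_identity (σ γ t s a : ℝ)
    (hσ : 0 < σ) (hγ : 0 < γ) (ht : 0 ≤ t) (hs : 0 ≤ s) (ha : 0 < a) :
    ∫ g : ℝ,
      (1 - 2 * Phi (-(t + s - 2 * σ * Real.sqrt γ * g) / (2 * a))) *
        min 1 (gpdf (σ ^ 2 * γ) (t - σ * Real.sqrt γ * g) /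
          gpdf (σ ^ 2 * γ) (σ * Real.sqrt γ * g)) * stdG g
      = 2 * (((gaussianReal 0 1).prod (gaussianReal 0 1))
          {p : ℝ × ℝ | t / 2 ≤ σ * Real.sqrt γ * p.1 ∧
            -s - t ≤ 2 * a * p.2 - 2 * σ * Real.sqrt γ * p.1 ∧
            2 * a * p.2 - 2 * σ * Real.sqrt γ * p.1 ≤ s - t}).toReal := by
  have hc : 0 < σ * Real.sqrt γ := by positivity
  rw [show σ ^ 2 * γ = (σ * Real.sqrt γ) ^ 2 by rw [mul_pow, Real.sq_sqrt hγ.le], mul_assoc 2 σ]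
  generalize σ * Real.sqrt γ = c at hc ⊢
  set l : ℝ → ℝ := fun x => (2 * c * x - s - t) / (2 * a)
  set u : ℝ → ℝ := fun x => (2 * c * x + s - t) / (2 * a)
  have hlu (x : ℝ) : l x ≤ u x := div_le_div_of_nonneg_right (by linarith) (by positivity)
  have hregion : {p : ℝ × ℝ | t / 2 ≤ c * p.1 ∧ -s - t ≤ 2 * a * p.2 - 2 * c * p.1 ∧
      2 * a * p.2 - 2 * c * p.1 ≤ s - t}
      = {p | p.1 ∈ Ici (t / c / 2) ∧ l p.1 ≤ p.2 ∧ p.2 ≤ u p.1} := by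
    ext p
    simp only [mem_ofPred_eq, mem_Ici, l, u, div_div, div_le_iff₀ (by positivity : 0 < c * 2),
      div_le_iff₀ (by positivity : 0 < 2 * a), le_div_iff₀ (by positivity : 0 < 2 * a)]
    constructor <;> rintro ⟨_, _, _⟩ <;> refine ⟨?_, ?_, ?_⟩ <;> linarith
  simp_rw [mul_assoc _ (min _ _), min_one_gpdf_div_mul_stdG hc]
  rw [integral_mul_min_stdG_sub (by fun_prop) (fun _ => abs_one_sub_two_mul_Phi_le _)
      (by positivity), ← measureReal_def, hregion, measureReal_gaussianReal_prod_setOf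
      measurableSet_Ici (by fun_prop) (by fun_prop) hlu,
    integral_Ici_eq_integral_Ioi, ← integral_const_mul]
  refine setIntegral_congr_fun measurableSet_Ioi fun x _ => ?_
  have hfold : -(t + s - 2 * c * (t / c - x)) / (2 * a) = -u x := by
    simp only [u]; field_simp; ring
  rw [hfold, Phi_neg, show -(t + s - 2 * c * x) / (2 * a) = l x by simp only [l]; ring]
  ring
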